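/- Let C and C' be clauses and L a literal. If C subsumes C' (i.e., Cσ ⊆ C' for some substitution σ), then there exists a clause C_L obtained from C by a finite number of constraint-factoring and constraint-elimination inferences such that C_L ⊴_L C'. -/

import Mathlib

set_option linter.unusedVariables false

/-!
A formalization of the setting of "Computing Witnesses Using the SCAN Algorithm":
first-order clause logic over a language with equality `≃`, individual variables,
(reserved) constants (`par`, used as the tuples of *fresh constants* `c̄`),
function symbols (`fn`, nullary ones serving as ordinary constants),
predicate symbols (`pred`) and predicate variables (`pvar`).
-/

namespace SCANPaper

/-! ### Terms -/

inductive FOTerm : Type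
  | var : ℕ → FOTerm
  | par : ℕ → FOTerm
  | fn : ℕ → List FOTerm → FOTerm

mutual
def FOTerm.beq : FOTerm → FOTerm → Bool
  | .var n, .var m => n == m
  | .par n, .par m => n == m
  | .fn f ts, .fn g ss => f == g && FOTerm.beqList ts ss
  | _, _ => false
def FOTerm.beqList : List FOTerm → List FOTerm → Bool
  | [], [] => true
  | t :: ts, s :: ss => FOTerm.beq t s && FOTerm.beqList ts ss
  | _, _ => false
end

mutual
def FOTerm.beq_iff : ∀ t s : FOTerm, FOTerm.beq t s = true ↔ t = s
  | .var n, .var m => by simp [FOTerm.beq]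
  | .var n, .par m => by simp [FOTerm.beq]
  | .var n, .fn g ss => by simp [FOTerm.beq]
  | .par n, .var m => by simp [FOTerm.beq]
  | .par n, .par m => by simp [FOTerm.beq]
  | .par n, .fn g ss => by simp [FOTerm.beq]
  | .fn f ts, .var m => by simp [FOTerm.beq]
  | .fn f ts, .par m => by simp [FOTerm.beq]
  | .fn f ts, .fn g ss => by simp [FOTerm.beq, FOTerm.beqList_iff ts ss]
def FOTerm.beqList_iff : ∀ ts ss : List FOTerm, FOTerm.beqList ts ss = true ↔ ts = ss
  | [], [] => by simp [FOTerm.beqList]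
  | [], s :: ss => by simp [FOTerm.beqList]
  | t :: ts, [] => by simp [FOTerm.beqList]
  | t :: ts, s :: ss => by
      simp [FOTerm.beqList, FOTerm.beq_iff t s, FOTerm.beqList_iff ts ss]
end

instance : DecidableEq FOTerm := fun t s => decidable_of_iff _ (FOTerm.beq_iff t s)

-- Substitution of terms for individual variables.
mutual
def FOTerm.subst (σ : ℕ → FOTerm) : FOTerm → FOTerm
  | .var n => σ n
  | .par n => .par n
  | .fn f ts => .fn f (FOTerm.substList σ ts)
def FOTerm.substList (σ : ℕ → FOTerm) : List FOTerm → List FOTerm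
  | [] => []
  | t :: ts => FOTerm.subst σ t :: FOTerm.substList σ ts
end

-- Substitution of terms for the reserved constants (`par`).
mutual
def FOTerm.psubst (θ : ℕ → FOTerm) : FOTerm → FOTerm
  | .var n => .var n
  | .par n => θ n
  | .fn f ts => .fn f (FOTerm.psubstList θ ts)
def FOTerm.psubstList (θ : ℕ → FOTerm) : List FOTerm → List FOTerm
  | [] => []
  | t :: ts => FOTerm.psubst θ t :: FOTerm.psubstList θ ts
end

-- A strict upper bound for the variables occurring in a term.
mutual
def FOTerm.maxVar : FOTerm → ℕ
  | .var n => n + 1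
  | .par _ => 0
  | .fn _ ts => FOTerm.maxVarList ts
def FOTerm.maxVarList : List FOTerm → ℕ
  | [] => 0
  | t :: ts => max (FOTerm.maxVar t) (FOTerm.maxVarList ts)
end

/-- Occurrence of the variable `v` in a term. -/
inductive FOTerm.HasVar (v : ℕ) : FOTerm → Prop
  | var : FOTerm.HasVar v (.var v)
  | fn {f : ℕ} {ts : List FOTerm} {t : FOTerm} :
      t ∈ ts → FOTerm.HasVar v t → FOTerm.HasVar v (.fn f ts)

/-- Occurrence of the reserved constant `c` in a term. -/
inductive FOTerm.HasPar (c : ℕ) : FOTerm → Prop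
  | par : FOTerm.HasPar c (.par c)
  | fn {f : ℕ} {ts : List FOTerm} {t : FOTerm} :
      t ∈ ts → FOTerm.HasPar c t → FOTerm.HasPar c (.fn f ts)

/-- The subterm relation. -/
inductive FOTerm.Subterm : FOTerm → FOTerm → Prop
  | refl (t : FOTerm) : FOTerm.Subterm t t
  | fn {s t : FOTerm} {f : ℕ} {ts : List FOTerm} :
      t ∈ ts → FOTerm.Subterm s t → FOTerm.Subterm s (.fn f ts)

/-- `s` is a *proper* subterm of `t`. -/
def FOTerm.ProperSubterm (s t : FOTerm) : Prop :=
  ∃ (f : ℕ) (ts : List FOTerm), t = FOTerm.fn f ts ∧ ∃ u ∈ ts, FOTerm.Subterm s u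

/-! ### Atoms, literals, clauses -/

inductive Atom : Type
  | pred : ℕ → List FOTerm → Atom      -- predicate symbol applied to terms
  | pvar : ℕ → List FOTerm → Atom      -- predicate variable applied to terms
  | eq : FOTerm → FOTerm → Atom        -- equality atom `t ≃ s`
  deriving DecidableEq

/-- A literal: an atom (`pos = true`) or a negated atom (`pos = false`). -/
structure Literal : Type where
  pos : Bool
  atom : Atom
  deriving DecidableEq

/-- A clause: a finite set of literals, read as the universal closure of the
disjunction of its literals. -/
abbrev Clause : Type := Finset Literal

/-- A clause set, read as the conjunction of its clauses. -/
abbrev ClauseSet : Type := Set Clause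

/-- The dual `L⊥` of a literal. -/
def Literal.dual (L : Literal) : Literal := ⟨!L.pos, L.atom⟩

/-- The symbol of an atom (predicate symbol / predicate variable / `≃`). -/
def Atom.sym : Atom → ℕ ⊕ ℕ ⊕ Unit
  | .pred p _ => Sum.inl p
  | .pvar X _ => Sum.inr (Sum.inl X)
  | .eq _ _ => Sum.inr (Sum.inr ())

/-- The terms (arguments) of an atom. -/
def Atom.args : Atom → List FOTerm
  | .pred _ ts => ts
  | .pvar _ ts => ts
  | .eq t s => [t, s]

/-- `L.sameKind L'`: `L` is an `L'`-literal, i.e. `L` and `L'` have the same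
predicate symbol and the same polarity. -/
def Literal.sameKind (L L' : Literal) : Prop :=
  L.pos = L'.pos ∧ L.atom.sym = L'.atom.sym

instance (L L' : Literal) : Decidable (L.sameKind L') := by
  unfold Literal.sameKind; infer_instance

def Literal.subst (σ : ℕ → FOTerm) (L : Literal) : Literal :=
  ⟨L.pos, match L.atom with
    | .pred p ts => .pred p (FOTerm.substList σ ts)
    | .pvar X ts => .pvar X (FOTerm.substList σ ts)
    | .eq t s => .eq (FOTerm.subst σ t) (FOTerm.subst σ s)⟩

def Literal.psubst (θ : ℕ → FOTerm) (L : Literal) : Literal :=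
  ⟨L.pos, match L.atom with
    | .pred p ts => .pred p (FOTerm.psubstList θ ts)
    | .pvar X ts => .pvar X (FOTerm.psubstList θ ts)
    | .eq t s => .eq (FOTerm.psubst θ t) (FOTerm.psubst θ s)⟩

def Clause.subst (σ : ℕ → FOTerm) (C : Clause) : Clause := C.image (Literal.subst σ)

def Clause.psubst (θ : ℕ → FOTerm) (C : Clause) : Clause := C.image (Literal.psubst θ)

/-- The set of variables occurring in a clause. -/
def Clause.vars (C : Clause) : Set ℕ :=
  { v | ∃ L ∈ C, ∃ t ∈ L.atom.args, FOTerm.HasVar v t }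

/-- A strict upper bound for the variables occurring in a clause. -/
def Clause.varBound (C : Clause) : ℕ :=
  C.sup (fun L => FOTerm.maxVarList L.atom.args)

/-- A clause contains none of the reserved constants (i.e. it is a clause of the
original language, so that the reserved constants are *fresh* for it). -/
def Clause.ParFree (C : Clause) : Prop :=
  ∀ L ∈ C, ∀ t ∈ L.atom.args, ∀ c : ℕ, ¬ FOTerm.HasPar c t

/-- The negated equation `t ≄ s`. -/
def neqLit (t s : FOTerm) : Literal := ⟨false, .eq t s⟩

/-- `t̄ ≄ s̄`, the clause (disjunction) of the disequations of corresponding terms. -/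
def constraintClause (ts ss : List FOTerm) : Clause :=
  (List.zipWith neqLit ts ss).toFinset

/-- A clause contains the predicate variable `X`. -/
def Clause.containsPvar (C : Clause) (X : ℕ) : Prop :=
  ∃ L ∈ C, ∃ ts, L.atom = Atom.pvar X ts

/-- A clause contains an occurrence of the predicate variable `X` of polarity `p`
(`true` = positive, `false` = negative). -/
def Clause.hasPvarPol (C : Clause) (X : ℕ) (p : Bool) : Prop :=
  ∃ L ∈ C, L.pos = p ∧ ∃ ts, L.atom = Atom.pvar X ts

/-! ### Semantics -/

/-- A first-order structure: a nonempty domain together with interpretations of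
the function symbols, the reserved constants, and the predicate symbols. -/
structure FOStructure : Type 1 where
  dom : Type
  inh : Inhabited dom
  fn : ℕ → List dom → dom
  par : ℕ → dom
  pred : ℕ → List dom → Prop

/-- Interpretations of the predicate variables. -/
abbrev PInterp (M : FOStructure) : Type := ℕ → List M.dom → Prop

/-- Valuations of the individual variables. -/
abbrev Valu (M : FOStructure) : Type := ℕ → M.dom

mutual
def FOTerm.eval (M : FOStructure) (ρ : Valu M) : FOTerm → M.dom
  | .var n => ρ n
  | .par n => M.par n
  | .fn f ts => M.fn f (FOTerm.evalList M ρ ts)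
def FOTerm.evalList (M : FOStructure) (ρ : Valu M) : List FOTerm → List M.dom
  | [] => []
  | t :: ts => FOTerm.eval M ρ t :: FOTerm.evalList M ρ ts
end

def Atom.sat (M : FOStructure) (ξ : PInterp M) (ρ : Valu M) : Atom → Prop
  | .pred p ts => M.pred p (FOTerm.evalList M ρ ts)
  | .pvar X ts => ξ X (FOTerm.evalList M ρ ts)
  | .eq t s => FOTerm.eval M ρ t = FOTerm.eval M ρ s

def Literal.sat (M : FOStructure) (ξ : PInterp M) (ρ : Valu M) (L : Literal) : Prop :=
  if L.pos then Atom.sat M ξ ρ L.atom else ¬ Atom.sat M ξ ρ L.atom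

/-- Truth of a clause: the universal closure of the disjunction of its literals. -/
def Clause.sat (M : FOStructure) (ξ : PInterp M) (C : Clause) : Prop :=
  ∀ ρ : Valu M, ∃ L ∈ C, Literal.sat M ξ ρ L

/-- Truth of a clause set: the conjunction of its clauses. -/
def ClauseSet.sat (M : FOStructure) (ξ : PInterp M) (N : ClauseSet) : Prop :=
  ∀ C ∈ N, Clause.sat M ξ C

/-- `N ⟹ N'`: semantic entailment between clause sets. -/
def entails (N N' : ClauseSet) : Prop :=
  ∀ (M : FOStructure) (ξ : PInterp M), ClauseSet.sat M ξ N → ClauseSet.sat M ξ N'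

/-- Entailment between clauses. -/
def Clause.entails (C C' : Clause) : Prop :=
  ∀ (M : FOStructure) (ξ : PInterp M), Clause.sat M ξ C → Clause.sat M ξ C'

/-- Logical equivalence between clauses. -/
def Clause.equiv (C C' : Clause) : Prop := Clause.entails C C' ∧ Clause.entails C' C

/-- Truth of the second-order formula `∃X̄ N` in `(M, ξ)`. -/
def satExists (Xs : List ℕ) (N : ClauseSet) (M : FOStructure) (ξ : PInterp M) : Prop :=
  ∃ ξ' : PInterp M, (∀ Y, Y ∉ Xs → ξ' Y = ξ Y) ∧ ClauseSet.sat M ξ' N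

/-! ### Subsumption, variable elimination -/

/-- A variant of a clause: the result of an injective renaming of variables
(clauses are identified up to renaming of variables). -/
def Clause.variant (C C' : Clause) : Prop :=
  ∃ π : ℕ → ℕ, Function.Injective π ∧ C' = Clause.subst (fun n => .var (π n)) C

/-- Equality of clause sets up to renaming of variables. -/
def ClauseSet.eqv (N N' : ClauseSet) : Prop :=
  (∀ C ∈ N, ∃ C' ∈ N', Clause.variant C C') ∧ (∀ C' ∈ N', ∃ C ∈ N, Clause.variant C C')

/-- `C` is a tautology. -/
def Clause.tautological (C : Clause) : Prop := ∃ L ∈ C, L.dual ∈ C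

/-- `C ⊴ C'`: `C` subsumes `C'`. -/
def Clause.subsumes (C C' : Clause) : Prop := ∃ σ, Clause.subst σ C ⊆ C'

/-- `C` is redundant in `N`: it is a tautology or is subsumed by a clause of `N`. -/
def Clause.redundantIn (C : Clause) (N : ClauseSet) : Prop :=
  C.tautological ∨ ∃ S ∈ N, Clause.subsumes S C

/-- `σ` is `L`-injective in `S`: distinct `L`-literals of `S` have distinct images. -/
def LInjective (L : Literal) (σ : ℕ → FOTerm) (S : Clause) : Prop :=
  ∀ L₁ ∈ S, ∀ L₂ ∈ S, L₁.sameKind L → L₂.sameKind L →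
    Literal.subst σ L₁ = Literal.subst σ L₂ → L₁ = L₂

/-- `S ⊴_L C`. -/
def subsumesL (L : Literal) (S C : Clause) : Prop :=
  ∃ σ, LInjective L σ S ∧ Clause.subst σ S ⊆ C

/-- One step of variable elimination: `C →_ve C'`. -/
def velimStep (C C' : Clause) : Prop :=
  ∃ (v : ℕ) (t : FOTerm), neqLit (.var v) t ∈ C ∧ ¬ FOTerm.ProperSubterm (.var v) t ∧
    C' = Clause.subst (fun n => if n = v then t else .var n) (C.erase (neqLit (.var v) t))

/-- `C →_ve* C'`: the reflexive-transitive closure of `→_ve`. -/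
def velim : Clause → Clause → Prop := Relation.ReflTransGen velimStep

/-- `S ⊴_L^ve C`. -/
def subsumesLve (L : Literal) (S C : Clause) : Prop :=
  ∃ C', velim C C' ∧ subsumesL L S C'

/-- `N ⊴_L^ve C` for a clause set `N`. -/
def setSubsumesLve (L : Literal) (N : ClauseSet) (C : Clause) : Prop :=
  ∃ S ∈ N, subsumesLve L S C

/-! ### Pointed clauses and constraint resolution -/

/-- A pointed clause `P = L̲ ∨ C`: a clause with a designated literal. -/
structure PClause : Type where
  lit : Literal
  rest : Clause

/-- The underlying clause of a pointed clause. -/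
def PClause.cl (P : PClause) : Clause := insert P.lit P.rest

/-- `Q` is `P`-resolvable: the designated literal of `Q` is an `L⊥`-literal,
where `L` is the designated literal of `P`. -/
def PClause.resolvableWith (P Q : PClause) : Prop := Q.lit.sameKind P.lit.dual

/-- Renaming a pointed clause apart, by shifting all its variables by `b`. -/
def PClause.shift (Q : PClause) (b : ℕ) : PClause :=
  ⟨Literal.subst (fun n => .var (n + b)) Q.lit, Clause.subst (fun n => .var (n + b)) Q.rest⟩

/-- The constraint resolvent of `P = L(t̄)̲ ∨ C` and `Q = L(s̄)⊥̲ ∨ C'`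
on the given (variable-disjoint) pointed clauses: `t̄ ≄ s̄ ∨ C ∨ C'`. -/
def rawResolvent (P Q : PClause) : Clause :=
  constraintClause P.lit.atom.args Q.lit.atom.args ∪ P.rest ∪ Q.rest

/-- `Res(P, Q)`: the constraint resolvent of `P` and `Q`, where (as clauses are
identified up to renaming of variables) `Q` is w.l.o.g. renamed apart from `P`. -/
def resolvent (P Q : PClause) : Clause :=
  rawResolvent P (Q.shift (Clause.varBound P.cl))

/-- One round of constraint resolution with `P`:
`Res_P^{≤1}(N) = N ∪ {Res(P,P') : P' a P-resolvable pointed clause with underlying clause in N}`. -/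
def ResStep (P : PClause) (N : ClauseSet) : ClauseSet :=
  N ∪ { R | ∃ C ∈ N, ∃ L' ∈ C, Literal.sameKind L' P.lit.dual ∧
        R = resolvent P ⟨L', C.erase L'⟩ }

/-- `Res_P^{≤k}(N)`. -/
def ResLe (P : PClause) : ℕ → ClauseSet → ClauseSet
  | 0, N => N
  | k+1, N => ResStep P (ResLe P k N)

/-- `Res_P^{<ω}(N)`: the resolution closure of `N` with respect to `P`. -/
def ResOmega (P : PClause) (N : ClauseSet) : ClauseSet :=
  { C | ∃ k, C ∈ ResLe P k N }

/-- `P` is purified in `N`. -/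
def purified (P : PClause) (N : ClauseSet) : Prop :=
  ∀ R ∈ ResLe P 1 N, setSubsumesLve P.lit.dual N R

end SCANPaper
namespace SCANPaper

/-! ### Unification -/

def Unifies (σ : ℕ → FOTerm) (ts ss : List FOTerm) : Prop :=
  FOTerm.substList σ ts = FOTerm.substList σ ss

/-- `σ` is a most general unifier of `t̄` and `s̄`. -/
def IsMGU (σ : ℕ → FOTerm) (ts ss : List FOTerm) : Prop :=
  Unifies σ ts ss ∧
    ∀ τ, Unifies τ ts ss →
      ∃ ρ, ∀ t : FOTerm, FOTerm.subst τ t = FOTerm.subst ρ (FOTerm.subst σ t)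

/-! ### The calculus 𝓒 -/

/-- The data of a derivation step of the calculus 𝓒. -/
inductive Step : Type
  | res (P Q : PClause)
  | fac (D : Clause) (L₁ L₂ : Literal)
  | celim (ts ss : List FOTerm) (C₀ : Clause) (σ : ℕ → FOTerm)
  | redDel (C : Clause)
  | varElim (C : Clause) (v : ℕ) (t : FOTerm)
  | extPurDel (X : ℕ) (p : Bool)
  | purDel (P : PClause)

/-- `StepOK S N N'`: the derivation step `S` leads from the clause set `N`
to the clause set `N'`. -/
def StepOK : Step → ClauseSet → ClauseSet → Prop
  | .res P Q, N, N' =>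
      P.cl ∈ N ∧ Q.cl ∈ N ∧ Q.lit.sameKind P.lit.dual ∧ N' = N ∪ {resolvent P Q}
  | .fac D L₁ L₂, N, N' =>
      D ∈ N ∧ L₁ ∈ D ∧ L₂ ∈ D ∧ L₁ ≠ L₂ ∧ L₁.sameKind L₂ ∧
        N' = N ∪ {constraintClause L₁.atom.args L₂.atom.args ∪ D.erase L₂}
  | .celim ts ss C₀ σ, N, N' =>
      (constraintClause ts ss ∪ C₀) ∈ N ∧ IsMGU σ ts ss ∧ N' = N ∪ {Clause.subst σ C₀}
  | .redDel C, N, N' => C ∈ N ∧ Clause.redundantIn C (N \ {C}) ∧ N' = N \ {C}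
  | .varElim C v t, N, N' =>
      C ∈ N ∧ neqLit (.var v) t ∈ C ∧ ¬ FOTerm.ProperSubterm (.var v) t ∧
        N' = (N \ {C}) ∪
          {Clause.subst (fun n => if n = v then t else .var n) (C.erase (neqLit (.var v) t))}
  | .extPurDel X p, N, N' =>
      (∀ C ∈ N, Clause.containsPvar C X → Clause.hasPvarPol C X p) ∧
        N' = {C | C ∈ N ∧ ¬ Clause.containsPvar C X}
  | .purDel P, N, N' =>
      P.cl ∈ N ∧ purified P (N \ {P.cl}) ∧ N' = N \ {P.cl}

/-- A derivation step of the calculus 𝓒. -/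
def CStep (N N' : ClauseSet) : Prop := ∃ S : Step, StepOK S N N'

/-- `DerivOK N D N'`: `D` is a 𝓒-derivation from `N` with conclusion `N'`. -/
inductive DerivOK : ClauseSet → List Step → ClauseSet → Prop
  | nil (N : ClauseSet) : DerivOK N [] N
  | cons {N N' N'' : ClauseSet} {S : Step} {D : List Step} :
      StepOK S N N' → DerivOK N' D N'' → DerivOK N (S :: D) N''

/-! ### Predicate expressions and predicate substitutions

Predicate expressions (such as the possibly infinitary `ℓRes_P`) are represented
by their semantics: for every structure and every interpretation of the (free)
predicate variables, a relation on the domain. -/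

def SemPred : Type 1 := (M : FOStructure) → PInterp M → List M.dom → Prop

/-- A predicate substitution; `none` means the predicate variable is not in its domain. -/
def PSubst : Type 1 := ℕ → Option SemPred

/-- `(Nσ)` is true in `(M, ξ)` iff `N` is true in `(M, σ.apply M ξ)`. -/
def PSubst.apply (σ : PSubst) (M : FOStructure) (ξ : PInterp M) : PInterp M :=
  fun X args =>
    match σ X with
    | none => ξ X args
    | some α => α M ξ args

def PSubst.id : PSubst := fun _ => none

/-- Composition: `σ.comp τ` is the substitution "first `σ`, then `τ`". -/
def PSubst.comp (σ τ : PSubst) : PSubst :=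
  fun X =>
    match σ X with
    | some α => some (fun M ξ d => α M (PSubst.apply τ M ξ) d)
    | none => τ X

def PSubst.single (X : ℕ) (α : SemPred) : PSubst :=
  fun Y => if Y = X then some α else none

/-- `σ ⟺ τ`: same domain and pointwise logically equivalent. -/
def PSubst.equiv (σ τ : PSubst) : Prop :=
  (∀ X, (σ X).isSome ↔ (τ X).isSome) ∧
  ∀ (X : ℕ) (M : FOStructure) (ξ : PInterp M) (args : List M.dom),
    PSubst.apply σ M ξ X args ↔ PSubst.apply τ M ξ X args

/-! ### The local resolution closure `ℓRes_P` and the substitutions `τ_S` -/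

/-- The tuple `c̄` of fresh constants of length `k`. -/
def paramArgs (k : ℕ) : List FOTerm := (List.range k).map FOTerm.par

/-- Reinterpret the fresh constants `c̄` by the domain elements `ds`. -/
def FOStructure.withPars (M : FOStructure) (ds : List M.dom) : FOStructure :=
  { M with par := fun n => ds.getD n (M.par n) }

/-- The clause `{L(c̄)⊥}` for the designated `X`-literal `L` of `P`. -/
def startClause (P : PClause) (X : ℕ) : Clause :=
  {⟨!P.lit.pos, Atom.pvar X (paramArgs P.lit.atom.args.length)⟩}

/-- `ℓRes_P = λc̄. ⋀_{R(c̄,v̄) ∈ Res_P^{<ω}(L(c̄)⊥)} ∀v̄ R(c̄,v̄)` as a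
(possibly infinitary) predicate expression. -/
def lResSem (P : PClause) (X : ℕ) : SemPred := fun M ξ args =>
  ∀ R ∈ ResOmega P {startClause P X}, Clause.sat (M.withPars args) ξ R

/-- `τ_{PurDel_P}`: `[X ← ℓRes_P]` if the designated literal is negative,
`[X ← ¬ℓRes_P]` if it is positive. -/
def tauPurDel (P : PClause) (X : ℕ) : PSubst :=
  PSubst.single X
    (if P.lit.pos then (fun M ξ a => ¬ lResSem P X M ξ a) else lResSem P X)

/-- `[X ← λū.⊥]`. -/
def tauBot (X : ℕ) : PSubst := PSubst.single X (fun _ _ _ => False)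

/-- `[X ← λū.⊤]`. -/
def tauTop (X : ℕ) : PSubst := PSubst.single X (fun _ _ _ => True)

/-- The substitution `τ_S` associated to a 𝓒-derivation step. -/
def Step.tau : Step → PSubst
  | .extPurDel X p => if p then tauTop X else tauBot X
  | .purDel P =>
      match P.lit.atom with
      | .pvar X _ => tauPurDel P X
      | _ => PSubst.id
  | _ => PSubst.id

/-- `σ(D) = τ_{S₁} ⋯ τ_{S_m}` for `D = (S₁, …, S_m)` (parametrized by the
assignment of substitutions to steps). -/
def derivSubst (tau : Step → PSubst) : List Step → PSubst
  | [] => PSubst.id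
  | S :: D => PSubst.comp (tau S) (derivSubst tau D)

/-- `σ` is a witness for `∃X̄ N`: `∃X̄ N ⟺ Nσ`. -/
def IsWitness (Xs : List ℕ) (N : ClauseSet) (σ : PSubst) : Prop :=
  ∀ (M : FOStructure) (ξ : PInterp M),
    satExists Xs N M ξ ↔ ClauseSet.sat M (PSubst.apply σ M ξ) N

/-! ### Fixpoint predicates: `α_{P,Y}` and `gfp_Y α_{P,Y}` -/

/-- The `L⊥`-literals among the non-designated literals of `P`. -/
def PClause.dualLits (P : PClause) : Finset Literal :=
  P.rest.filter (fun L' => L'.sameKind P.lit.dual)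

/-- The non-designated literals of `P` that are not `L⊥`-literals. -/
def PClause.sideLits (P : PClause) : Finset Literal :=
  P.rest.filter (fun L' => ¬ L'.sameKind P.lit.dual)

/-- The monotone operator on `k`-ary relations induced by
`α_{P,Y} = λū. L(ū)⊥ ∧ ∀v̄ (ū ≄ t̄(v̄) ∨ C(v̄) ∨ ⋁ᵢ Y(t̄ᵢ(v̄)))`,
for `P = L(t̄(v̄))̲ ∨ C(v̄) ∨ ⋁ᵢ L(t̄ᵢ(v̄))⊥` with designated `X`-literal `L`. -/
def alphaOp (P : PClause) (X : ℕ) (M : FOStructure) (ξ : PInterp M)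
    (R : List M.dom → Prop) (args : List M.dom) : Prop :=
  (if P.lit.pos then ¬ ξ X args else ξ X args) ∧
  ∀ ρ : Valu M,
    args ≠ FOTerm.evalList M ρ P.lit.atom.args ∨
    (∃ L' ∈ P.sideLits, Literal.sat M ξ ρ L') ∨
    (∃ L' ∈ P.dualLits, R (FOTerm.evalList M ρ L'.atom.args))

/-- The greatest fixpoint (Knaster–Tarski) of a monotone operator on relations. -/
def gfpRel {δ : Type} (F : (List δ → Prop) → List δ → Prop) : List δ → Prop :=
  fun a => ∃ S : List δ → Prop, (∀ b, S b → F S b) ∧ S a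

/-- `gfp_Y α_{P,Y}` as a predicate expression. -/
def gfpAlphaSem (P : PClause) (X : ℕ) : SemPred :=
  fun M ξ args => gfpRel (alphaOp P X M ξ) args

/-- `τ*_S`: as `τ_S`, except that purified clause deletion gets the fixpoint witness. -/
def Step.tauFp : Step → PSubst
  | .purDel P =>
      match P.lit.atom with
      | .pvar X _ =>
          PSubst.single X
            (if P.lit.pos then (fun M ξ a => ¬ gfpAlphaSem P X M ξ a) else gfpAlphaSem P X)
      | _ => PSubst.id
  | S => S.tau

/-! ### The clause sets `B_P^m` and first-order witnesses -/

/-- The clause sets `B_P^m(c̄)`: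
`B_P^0 := λc̄.{⊥}` and
`B_P^{m+1} := λc̄. {L(c̄)⊥} ∪ {c̄ ≄ t̄(v̄) ∨ C(v̄) ∨ ⋁ᵢ Rᵢ(t̄ᵢ(v̄), z̄ᵢ) : Rᵢ ∈ B_P^m(c̄)}`,
where the chosen clauses `Rᵢ` are renamed apart (fresh variables `z̄ᵢ`) and their
fresh constants `c̄` are replaced by the argument terms `t̄ᵢ(v̄)`. -/
def BSet (P : PClause) (X : ℕ) : ℕ → ClauseSet
  | 0 => {(∅ : Clause)}
  | m+1 =>
      insert (startClause P X)
        { R | ∃ g : Literal → Clause,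
            (∀ L' ∈ P.dualLits, g L' ∈ BSet P X m) ∧
            R = constraintClause (paramArgs P.lit.atom.args.length) P.lit.atom.args
                ∪ P.sideLits
                ∪ P.dualLits.sup (fun L' =>
                    Clause.psubst (fun j => (L'.atom.args).getD j (.par j))
                      (Clause.subst
                        (fun v => .var (Clause.varBound P.cl + v * P.dualLits.card
                                          + P.dualLits.toList.idxOf L'))
                        (g L'))) }

/-- `B_P^m` as a predicate expression (the conjunction of the universal closures
of the clauses of `B_P^m(c̄)`). -/
def BSem (P : PClause) (X : ℕ) (m : ℕ) : SemPred := fun M ξ args =>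
  ∀ R ∈ BSet P X m, Clause.sat (M.withPars args) ξ R

/-- `τ^m_{PurDel_P}`: `[X ← B_P^m]` if the designated literal is negative,
`[X ← ¬B_P^m]` if it is positive. -/
def tauB (P : PClause) (X : ℕ) (m : ℕ) : PSubst :=
  PSubst.single X
    (if P.lit.pos then (fun M ξ a => ¬ BSem P X m M ξ a) else BSem P X m)

/-- The substitutions `τᵢ` of Definition `σ_fo(D, f)`; purified clause deletion
steps get `τ^m_{PurDel_P}` where `m` is the annotation value. -/
def Step.tauFo (m : ℕ) : Step → PSubst
  | .purDel P =>
      match P.lit.atom with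
      | .pvar X _ => tauB P X m
      | _ => PSubst.id
  | S => S.tau

/-- `σ_fo(D, f) = τ₁ ⋯ τ_m`. -/
def derivSubstFo (f : ℕ → ℕ) : ℕ → List Step → PSubst
  | _, [] => PSubst.id
  | i, S :: D => PSubst.comp (Step.tauFo (f i) S) (derivSubstFo f (i+1) D)

/-! ### Purification subsumptions and the purification subsumption graph -/

/-- `R_P(N)`: the set of `P`-resolvable pointed clauses `C[L'̲]` with `C ∈ N`
and `L'` an `L⊥`-literal of `C`. -/
def RP (P : PClause) (N : ClauseSet) : Set PClause :=
  { Q | ∃ C ∈ N, ∃ L' ∈ C, Literal.sameKind L' P.lit.dual ∧ Q = ⟨L', C.erase L'⟩ }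

/-- `s` is a `P`-purification subsumption for `N`. -/
def IsPurSub (P : PClause) (N : ClauseSet) (s : PClause → Clause) : Prop :=
  ∀ Q ∈ RP P N, s Q ∈ N ∧ subsumesLve P.lit.dual (s Q) (resolvent P Q)

/-- The edge relation of the purification subsumption graph `G(N, P, s)`. -/
def GEdge (P : PClause) (N : ClauseSet) (s : PClause → Clause) (C C' : Clause) : Prop :=
  ∃ Q ∈ RP P N, Q.cl = C ∧ s Q = C'

/-- There is a path of length `n` in the graph with edge relation `E`. -/
def HasPathLen (E : Clause → Clause → Prop) (n : ℕ) : Prop :=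
  ∃ c : ℕ → Clause, ∀ i < n, E (c i) (c (i+1))

/-- `P` is `k`-acyclically purified in `N`: there is a `P`-purification subsumption
`s` for `N` such that `G(N, P, s)` is acyclic and has longest path length `k`. -/
def kAcyclicallyPurified (P : PClause) (N : ClauseSet) (k : ℕ) : Prop :=
  ∃ s : PClause → Clause, IsPurSub P N s ∧
    (∀ C, ¬ Relation.TransGen (GEdge P N s) C C) ∧
    (∀ n, HasPathLen (GEdge P N s) n → n ≤ k) ∧
    HasPathLen (GEdge P N s) k

end SCANPaper
namespace SCANPaper

/-! ### The inference system 𝓘 (and its extension by paramodulation) -/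

/-- Derivability of a clause from a clause set in the inference system 𝓘
(constraint resolution, constraint factoring, constraint elimination).
Since clauses are identified up to renaming of variables, a clause may be
replaced by any variant of itself. -/
inductive IDerives (N : ClauseSet) : Clause → Prop
  | ax {C : Clause} : C ∈ N → IDerives N C
  | variant {C C' : Clause} : IDerives N C → Clause.variant C C' → IDerives N C'
  | res (P Q : PClause) : IDerives N P.cl → IDerives N Q.cl →
      Q.lit.sameKind P.lit.dual → Disjoint (Clause.vars P.cl) (Clause.vars Q.cl) →
      IDerives N (rawResolvent P Q)
  | fac {D : Clause} (L₁ L₂ : Literal) : IDerives N D → L₁ ∈ D → L₂ ∈ D → L₁ ≠ L₂ →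
      L₁.sameKind L₂ →
      IDerives N (constraintClause L₁.atom.args L₂.atom.args ∪ D.erase L₂)
  | celim (ts ss : List FOTerm) (C₀ : Clause) (σ : ℕ → FOTerm) :
      IDerives N (constraintClause ts ss ∪ C₀) → IsMGU σ ts ss →
      IDerives N (Clause.subst σ C₀)

/-- Replacement of one occurrence of the subterm `r` by `t` in a term. -/
inductive FOTerm.ReplOcc (r t : FOTerm) : FOTerm → FOTerm → Prop
  | here : FOTerm.ReplOcc r t r t
  | fn {f : ℕ} {pre post : List FOTerm} {s s' : FOTerm} :
      FOTerm.ReplOcc r t s s' →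
      FOTerm.ReplOcc r t (.fn f (pre ++ s :: post)) (.fn f (pre ++ s' :: post))

/-- Replacement of one occurrence of the subterm `r` by `t` in an atom. -/
inductive Atom.ReplOcc (r t : FOTerm) : Atom → Atom → Prop
  | pred {p : ℕ} {pre post : List FOTerm} {s s' : FOTerm} :
      FOTerm.ReplOcc r t s s' →
      Atom.ReplOcc r t (.pred p (pre ++ s :: post)) (.pred p (pre ++ s' :: post))
  | pvar {X : ℕ} {pre post : List FOTerm} {s s' : FOTerm} :
      FOTerm.ReplOcc r t s s' →
      Atom.ReplOcc r t (.pvar X (pre ++ s :: post)) (.pvar X (pre ++ s' :: post))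
  | eqL {a a' b : FOTerm} :
      FOTerm.ReplOcc r t a a' → Atom.ReplOcc r t (.eq a b) (.eq a' b)
  | eqR {a b b' : FOTerm} :
      FOTerm.ReplOcc r t b b' → Atom.ReplOcc r t (.eq a b) (.eq a b')

/-- `C'` results from `C` by replacing one occurrence of the subterm `r` by `t`
(in particular, `C` contains the subterm `r`). -/
def Clause.ReplOcc (r t : FOTerm) (C C' : Clause) : Prop :=
  ∃ L ∈ C, ∃ A' : Atom, Atom.ReplOcc r t L.atom A' ∧
    C' = insert (⟨L.pos, A'⟩ : Literal) (C.erase L)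

/-- The positive equation `s ≃ t` as a literal. -/
def eqLit (s t : FOTerm) : Literal := ⟨true, .eq s t⟩

/-- Derivability in the inference system 𝓘 + ParMod. -/
inductive IPDerives (N : ClauseSet) : Clause → Prop
  | ax {C : Clause} : C ∈ N → IPDerives N C
  | variant {C C' : Clause} : IPDerives N C → Clause.variant C C' → IPDerives N C'
  | res (P Q : PClause) : IPDerives N P.cl → IPDerives N Q.cl →
      Q.lit.sameKind P.lit.dual → Disjoint (Clause.vars P.cl) (Clause.vars Q.cl) →
      IPDerives N (rawResolvent P Q)
  | fac {D : Clause} (L₁ L₂ : Literal) : IPDerives N D → L₁ ∈ D → L₂ ∈ D → L₁ ≠ L₂ →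
      L₁.sameKind L₂ →
      IPDerives N (constraintClause L₁.atom.args L₂.atom.args ∪ D.erase L₂)
  | celim (ts ss : List FOTerm) (C₀ : Clause) (σ : ℕ → FOTerm) :
      IPDerives N (constraintClause ts ss ∪ C₀) → IsMGU σ ts ss →
      IPDerives N (Clause.subst σ C₀)
  | parMod {D C' C'' : Clause} (s t r : FOTerm) (σ : ℕ → FOTerm) :
      IPDerives N D → IPDerives N C' → eqLit s t ∈ D →
      Clause.ReplOcc r t C' C'' → IsMGU σ [s] [r] →
      IPDerives N (Clause.subst σ ((D.erase (eqLit s t)) ∪ C''))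

/-- A clause of the language without the equality symbol. -/
def Clause.EqFree (C : Clause) : Prop := ∀ L ∈ C, ∀ t s : FOTerm, L.atom ≠ .eq t s

/-! ### First-order formulas (for background theories) -/

inductive Formula : Type
  | atom : Atom → Formula
  | fls : Formula
  | neg : Formula → Formula
  | conj : Formula → Formula → Formula
  | disj : Formula → Formula → Formula
  | impl : Formula → Formula → Formula
  | biimpl : Formula → Formula → Formula
  | all : ℕ → Formula → Formula
  | exi : ℕ → Formula → Formula

def Formula.sat (M : FOStructure) (ξ : PInterp M) : Formula → Valu M → Prop
  | .atom a, ρ => Atom.sat M ξ ρ a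
  | .fls, _ => False
  | .neg φ, ρ => ¬ Formula.sat M ξ φ ρ
  | .conj φ ψ, ρ => Formula.sat M ξ φ ρ ∧ Formula.sat M ξ ψ ρ
  | .disj φ ψ, ρ => Formula.sat M ξ φ ρ ∨ Formula.sat M ξ ψ ρ
  | .impl φ ψ, ρ => Formula.sat M ξ φ ρ → Formula.sat M ξ ψ ρ
  | .biimpl φ ψ, ρ => Formula.sat M ξ φ ρ ↔ Formula.sat M ξ ψ ρ
  | .all v φ, ρ => ∀ d : M.dom, Formula.sat M ξ φ (Function.update ρ v d)
  | .exi v φ, ρ => ∃ d : M.dom, Formula.sat M ξ φ (Function.update ρ v d)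

/-- The free individual variables of a formula. -/
def Formula.fv : Formula → Set ℕ
  | .atom a => { v | ∃ t ∈ a.args, FOTerm.HasVar v t }
  | .fls => ∅
  | .neg φ => φ.fv
  | .conj φ ψ => φ.fv ∪ ψ.fv
  | .disj φ ψ => φ.fv ∪ ψ.fv
  | .impl φ ψ => φ.fv ∪ ψ.fv
  | .biimpl φ ψ => φ.fv ∪ ψ.fv
  | .all v φ => φ.fv \ {v}
  | .exi v φ => φ.fv \ {v}

def Atom.pvarsOf : Atom → Set ℕ
  | .pvar X _ => {X}
  | _ => ∅

/-- The predicate variables occurring in a formula. -/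
def Formula.pvars : Formula → Set ℕ
  | .atom a => a.pvarsOf
  | .fls => ∅
  | .neg φ => φ.pvars
  | .conj φ ψ => φ.pvars ∪ ψ.pvars
  | .disj φ ψ => φ.pvars ∪ ψ.pvars
  | .impl φ ψ => φ.pvars ∪ ψ.pvars
  | .biimpl φ ψ => φ.pvars ∪ ψ.pvars
  | .all _ φ => φ.pvars
  | .exi _ φ => φ.pvars

/-- Truth of the second-order formula `∃X̄ φ` in `(M, ξ, ρ)`. -/
def satExistsF (Xs : List ℕ) (φ : Formula) (M : FOStructure) (ξ : PInterp M)
    (ρ : Valu M) : Prop :=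
  ∃ ξ' : PInterp M, (∀ Y, Y ∉ Xs → ξ' Y = ξ Y) ∧ Formula.sat M ξ' φ ρ

/-! ### Miscellaneous -/

/-- The first-order predicate `λū. C(ū)` determined by a clause `C` whose free
variables are among `ū = us`, as a predicate expression. -/
def clausePred (us : List ℕ) (C : Clause) : SemPred := fun M ξ args =>
  ∃ L ∈ C,
    Literal.sat M ξ
      (fun n => if n ∈ us then args.getD (us.idxOf n) M.inh.default else M.inh.default) L

/-- One constraint-factoring or constraint-elimination inference on a clause. -/
def facElimStep (C C' : Clause) : Prop :=
  (∃ L₁ ∈ C, ∃ L₂ ∈ C, L₁ ≠ L₂ ∧ L₁.sameKind L₂ ∧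
      C' = constraintClause L₁.atom.args L₂.atom.args ∪ C.erase L₂) ∨
  (∃ (ts ss : List FOTerm) (C₀ : Clause) (σ : ℕ → FOTerm),
      C = constraintClause ts ss ∪ C₀ ∧ IsMGU σ ts ss ∧ C' = Clause.subst σ C₀)

end SCANPaper

/-!
If `Cσ ⊆ C'` and `σ` is not `L`-injective in `C`, then `σ` merges two distinct `L`-literals
`L₁, L₂` of `C`, so their argument tuples are unifiable. Constraint-factoring `L₁, L₂` and then
eliminating the constraint `t̄₁ ≄ t̄₂` with a most general unifier `μ` produces `(C ∖ {L₂})μ`,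
a clause with fewer literals than `C` that still subsumes `C'`, since `σ = μρ` for some `ρ`.
Induction on the number of literals concludes. Most general unifiers of unifiable tuples exist by
the Martelli–Montanari transformation rules (deletion, decomposition, variable elimination),
which terminate because each rule lowers the number of variables or, keeping it, the size.
-/

namespace SCANPaper

mutual
def FOTerm.vars : FOTerm → Finset ℕ
  | .var n => {n}
  | .par _ => ∅
  | .fn _ ts => FOTerm.varsList ts
def FOTerm.varsList : List FOTerm → Finset ℕ
  | [] => ∅
  | t :: ts => FOTerm.vars t ∪ FOTerm.varsList ts
end

mutual
def FOTerm.size : FOTerm → ℕ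
  | .var _ => 1
  | .par _ => 1
  | .fn _ ts => FOTerm.sizeList ts + 1
def FOTerm.sizeList : List FOTerm → ℕ
  | [] => 0
  | t :: ts => FOTerm.size t + FOTerm.sizeList ts
end

namespace FOTerm

theorem one_le_size (t : FOTerm) : 1 ≤ t.size := by
  cases t <;> simp [size]

theorem varsList_append (ts ss : List FOTerm) :
    varsList (ts ++ ss) = varsList ts ∪ varsList ss := by
  induction ts with
  | nil => simp [varsList]
  | cons t ts ih => simp [varsList, ih, Finset.union_assoc]

theorem sizeList_append (ts ss : List FOTerm) :
    sizeList (ts ++ ss) = sizeList ts + sizeList ss := by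
  induction ts with
  | nil => simp [sizeList]
  | cons t ts ih => simp [sizeList, ih, Nat.add_assoc]

theorem substList_eq_map (σ : ℕ → FOTerm) (ts : List FOTerm) :
    substList σ ts = ts.map (subst σ) := by
  induction ts with
  | nil => rfl
  | cons t ts ih => simp [substList, ih]

mutual
theorem subst_subst (σ ρ : ℕ → FOTerm) :
    ∀ t, subst ρ (subst σ t) = subst (subst ρ ∘ σ) t
  | .var _ => rfl
  | .par _ => rfl
  | .fn f ts => by simp [subst, substList_substList σ ρ ts]
theorem substList_substList (σ ρ : ℕ → FOTerm) :
    ∀ ts, substList ρ (substList σ ts) = substList (subst ρ ∘ σ) ts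
  | [] => rfl
  | t :: ts => by simp [substList, subst_subst σ ρ t, substList_substList σ ρ ts]
end

mutual
theorem subst_congr {σ τ : ℕ → FOTerm} :
    ∀ t, (∀ n ∈ vars t, σ n = τ n) → subst σ t = subst τ t
  | .var n, h => h n (by simp [vars])
  | .par _, _ => rfl
  | .fn f ts, h => by simp [subst, substList_congr ts h]
theorem substList_congr {σ τ : ℕ → FOTerm} :
    ∀ ts, (∀ n ∈ varsList ts, σ n = τ n) → substList σ ts = substList τ ts
  | [], _ => rfl
  | t :: ts, h => by
    simp only [varsList, Finset.mem_union] at h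
    simp [substList, subst_congr t fun n hn => h n (.inl hn),
      substList_congr ts fun n hn => h n (.inr hn)]
end

mutual
theorem subst_var_eq_self : ∀ t, subst var t = t
  | .var _ => rfl
  | .par _ => rfl
  | .fn f ts => by simp [subst, substList_var_eq_self ts]
theorem substList_var_eq_self : ∀ ts, substList var ts = ts
  | [] => rfl
  | t :: ts => by simp [substList, subst_var_eq_self t, substList_var_eq_self ts]
end

mutual
theorem vars_subst (σ : ℕ → FOTerm) :
    ∀ t, vars (subst σ t) = (vars t).biUnion (vars ∘ σ)
  | .var n => by simp [subst, vars]
  | .par _ => by simp [subst, vars]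
  | .fn f ts => by simp [subst, vars, varsList_substList σ ts]
theorem varsList_substList (σ : ℕ → FOTerm) :
    ∀ ts, varsList (substList σ ts) = (varsList ts).biUnion (vars ∘ σ)
  | [] => by simp [substList, varsList]
  | t :: ts => by
    simp [substList, varsList, vars_subst σ t, varsList_substList σ ts, Finset.union_biUnion]
end

mutual
theorem size_le_size_subst (τ : ℕ → FOTerm) {x : ℕ} :
    ∀ t, x ∈ vars t → (τ x).size ≤ (subst τ t).size
  | .var n, h => by simp_all [vars, subst]
  | .par _, h => by simp [vars] at h
  | .fn f ts, h => by
    have := sizeList_le_sizeList_substList τ ts h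
    simp only [subst, size]; omega
theorem sizeList_le_sizeList_substList (τ : ℕ → FOTerm) {x : ℕ} :
    ∀ ts, x ∈ varsList ts → (τ x).size ≤ sizeList (substList τ ts)
  | t :: ts, h => by
    simp only [varsList, Finset.mem_union] at h
    simp only [substList, sizeList]
    rcases h with h | h
    · have := size_le_size_subst τ t h; omega
    · have := sizeList_le_sizeList_substList τ ts h; omega
end

theorem not_mem_vars_of_subst_eq {τ : ℕ → FOTerm} {x : ℕ} {t : FOTerm}
    (h : τ x = subst τ t) (ht : t ≠ var x) : x ∉ vars t := by
  intro hx
  match t, hx with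
  | .var y, hx => simp_all [vars]
  | .fn f ts, hx =>
    have := sizeList_le_sizeList_substList τ ts hx
    rw [h] at this
    simp only [subst, size] at this
    omega

end FOTerm

open FOTerm

theorem FOTerm.subst_comp_update_var {τ : ℕ → FOTerm} {x : ℕ} {s : FOTerm}
    (h : τ x = subst τ s) : subst τ ∘ Function.update var x s = τ := by
  ext1 n
  rcases eq_or_ne n x with rfl | hn
  · simpa [subst] using h.symm
  · simp [hn, subst]

theorem unifies_cons_cons_iff {σ : ℕ → FOTerm} {t s : FOTerm} {ts ss : List FOTerm} :
    Unifies σ (t :: ts) (s :: ss) ↔ subst σ t = subst σ s ∧ Unifies σ ts ss := by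
  simp [Unifies, substList]

theorem Unifies.symm {σ : ℕ → FOTerm} {ts ss : List FOTerm} (h : Unifies σ ts ss) :
    Unifies σ ss ts :=
  Eq.symm h

theorem Unifies.length_eq {σ : ℕ → FOTerm} {ts ss : List FOTerm} (h : Unifies σ ts ss) :
    ts.length = ss.length := by
  simpa [Unifies, substList_eq_map] using congrArg List.length h

theorem unifies_append_iff {σ : ℕ → FOTerm} {as bs ts ss : List FOTerm}
    (h : as.length = bs.length) :
    Unifies σ (as ++ ts) (bs ++ ss) ↔ Unifies σ as bs ∧ Unifies σ ts ss := by
  simp only [Unifies, substList_eq_map, List.map_append]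
  exact ⟨fun h' => List.append_inj h' (by simpa using h), fun ⟨h₁, h₂⟩ => h₁ ▸ h₂ ▸ rfl⟩

theorem unifies_substList_iff {τ θ : ℕ → FOTerm} {ts ss : List FOTerm} :
    Unifies τ (substList θ ts) (substList θ ss) ↔ Unifies (subst τ ∘ θ) ts ss := by
  simp only [Unifies, substList_substList]

theorem isMGU_iff {σ : ℕ → FOTerm} {ts ss : List FOTerm} :
    IsMGU σ ts ss ↔ Unifies σ ts ss ∧ ∀ τ, Unifies τ ts ss → ∃ ρ, τ = subst ρ ∘ σ := by
  refine and_congr_right fun _ => forall₂_congr fun τ _ => exists_congr fun ρ => ?_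
  refine ⟨fun h => funext fun n => h (.var n), fun h t => ?_⟩
  rw [subst_subst, h]

theorem IsMGU.of_unifies_iff {σ : ℕ → FOTerm} {ts ss ts' ss' : List FOTerm}
    (h : ∀ τ, Unifies τ ts ss ↔ Unifies τ ts' ss') (hσ : IsMGU σ ts ss) :
    IsMGU σ ts' ss' :=
  ⟨(h σ).1 hσ.1, fun τ hτ => hσ.2 τ ((h τ).2 hτ)⟩

theorem isMGU_var_nil : IsMGU var [] [] :=
  isMGU_iff.2 ⟨rfl, fun τ _ => ⟨τ, rfl⟩⟩

theorem IsMGU.var_cons {x : ℕ} {s : FOTerm} {ts ss : List FOTerm} {μ : ℕ → FOTerm}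
    (hx : x ∉ vars s)
    (hμ : IsMGU μ (substList (Function.update var x s) ts)
      (substList (Function.update var x s) ss)) :
    IsMGU (subst μ ∘ Function.update var x s) (var x :: ts) (s :: ss) := by
  set θ := Function.update var x s
  have hθs : subst θ s = s := by
    rw [subst_congr s fun n hn => Function.update_of_ne (ne_of_mem_of_not_mem hn hx) _ _,
      subst_var_eq_self]
  rw [isMGU_iff] at hμ ⊢
  refine ⟨unifies_cons_cons_iff.2 ⟨?_, unifies_substList_iff.1 hμ.1⟩, fun τ hτ => ?_⟩
  · simp [θ, subst, ← subst_subst, hθs]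
  obtain ⟨hτx, hτ⟩ := unifies_cons_cons_iff.1 hτ
  have hτθ : subst τ ∘ θ = τ := subst_comp_update_var hτx
  obtain ⟨ρ, hρ⟩ := hμ.2 τ (unifies_substList_iff.2 (by rwa [hτθ]))
  refine ⟨ρ, ?_⟩
  calc τ = subst τ ∘ θ := hτθ.symm
    _ = subst ρ ∘ (subst μ ∘ θ) := by
      ext1 n; simp [hρ, Function.comp_apply, subst_subst]

theorem varsList_substList_update_subset {x : ℕ} {s : FOTerm} (hx : x ∉ vars s)
    (ts : List FOTerm) :
    varsList (substList (Function.update var x s) ts) ⊆ (varsList ts ∪ vars s).erase x := by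
  intro y hy
  rw [varsList_substList, Finset.mem_biUnion] at hy
  obtain ⟨n, hn, hy⟩ := hy
  rcases eq_or_ne n x with rfl | hnx
  · simp only [Function.comp_apply, Function.update_self] at hy
    exact Finset.mem_erase.2 ⟨ne_of_mem_of_not_mem hy hx, Finset.mem_union_right _ hy⟩
  · simp only [Function.comp_apply, Function.update_of_ne hnx, vars,
      Finset.mem_singleton] at hy
    exact Finset.mem_erase.2 ⟨hy ▸ hnx, Finset.mem_union_left _ (hy ▸ hn)⟩

/-- Eliminating a variable lowers the first component; deleting a trivial pair or decomposing
`f(ā) ≃ f(b̄)` keeps the variables and lowers the size. -/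
def unifMeasure (ts ss : List FOTerm) : ℕ × ℕ :=
  ((varsList ts ∪ varsList ss).card, sizeList ts + sizeList ss)

local notation:50 a " ≺ " b => Prod.Lex (· < ·) (· < ·) a b

theorem lex_of_le_of_lt {a b c d : ℕ} (h₁ : a ≤ c) (h₂ : b < d) : (a, b) ≺ (c, d) := by
  rcases h₁.lt_or_eq with h | rfl
  exacts [.left _ _ h, .right _ h₂]

theorem unifMeasure_comm (ts ss : List FOTerm) : unifMeasure ts ss = unifMeasure ss ts := by
  simp only [unifMeasure, Finset.union_comm, Nat.add_comm]

theorem unifMeasure_cons_self (t : FOTerm) (ts ss : List FOTerm) :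
    unifMeasure ts ss ≺ unifMeasure (t :: ts) (t :: ss) := by
  have hvars : varsList ts ∪ varsList ss ⊆ varsList (t :: ts) ∪ varsList (t :: ss) := by
    simp only [varsList]; exact Finset.union_subset_union
      Finset.subset_union_right Finset.subset_union_right
  refine lex_of_le_of_lt (Finset.card_le_card hvars) ?_
  have := one_le_size t
  simp only [sizeList]
  omega

theorem unifMeasure_fn_cons (f : ℕ) (as bs ts ss : List FOTerm) :
    unifMeasure (as ++ ts) (bs ++ ss) ≺ unifMeasure (fn f as :: ts) (fn f bs :: ss) := by
  have hvars : varsList (as ++ ts) ∪ varsList (bs ++ ss)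
      = varsList (fn f as :: ts) ∪ varsList (fn f bs :: ss) := by
    simp only [varsList, varsList_append, vars]
  simp only [unifMeasure, hvars]
  exact Prod.Lex.right _ (by simp only [sizeList_append, sizeList, size]; omega)

theorem unifMeasure_var_cons {x : ℕ} {s : FOTerm} (hx : x ∉ vars s) (ts ss : List FOTerm) :
    unifMeasure (substList (Function.update var x s) ts)
      (substList (Function.update var x s) ss) ≺ unifMeasure (var x :: ts) (s :: ss) := by
  set V := varsList (var x :: ts) ∪ varsList (s :: ss)
  have hV : ∀ us, varsList us ∪ vars s ⊆ V →
      varsList (substList (Function.update var x s) us) ⊆ V.erase x := fun us h =>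
    (varsList_substList_update_subset hx us).trans (Finset.erase_subset_erase x h)
  have hxV : x ∈ V := by simp [V, varsList, vars]
  refine Prod.Lex.left _ _ (lt_of_le_of_lt (Finset.card_le_card (Finset.union_subset
    (hV ts ?_) (hV ss ?_))) (Finset.card_erase_lt_of_mem hxV))
  all_goals
    intro y
    simp only [V, varsList, vars, Finset.mem_union, Finset.mem_singleton]
    tauto

theorem exists_isMGU_of_unifies : ∀ (ts ss : List FOTerm) (τ : ℕ → FOTerm),
    Unifies τ ts ss → ∃ σ, IsMGU σ ts ss
  | [], [], _, _ => ⟨var, isMGU_var_nil⟩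
  | [], _ :: _, _, h | _ :: _, [], _, h => by simp [Unifies, substList] at h
  | t :: ts, s :: ss, τ, h => by
    obtain ⟨hts, h'⟩ := unifies_cons_cons_iff.1 h
    by_cases hst : t = s
    · subst hst
      obtain ⟨σ, hσ⟩ := exists_isMGU_of_unifies ts ss τ h'
      exact ⟨σ, hσ.of_unifies_iff fun _ => by simp [unifies_cons_cons_iff]⟩
    match t, s, hts, hst with
    | .var x, s, hts, hst =>
      have hx : x ∉ vars s := not_mem_vars_of_subst_eq hts (Ne.symm hst)
      obtain ⟨μ, hμ⟩ := exists_isMGU_of_unifies (substList (Function.update var x s) ts)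
        (substList (Function.update var x s) ss) τ
        (unifies_substList_iff.2 (by rwa [subst_comp_update_var hts]))
      exact ⟨_, hμ.var_cons hx⟩
    | t, .var x, hts, hst =>
      have hx : x ∉ vars t := not_mem_vars_of_subst_eq hts.symm hst
      obtain ⟨μ, hμ⟩ := exists_isMGU_of_unifies (substList (Function.update var x t) ss)
        (substList (Function.update var x t) ts) τ
        (unifies_substList_iff.2 (by rw [subst_comp_update_var hts.symm]; exact h'.symm))
      exact ⟨_, (hμ.var_cons hx).of_unifies_iff fun _ => ⟨Unifies.symm, Unifies.symm⟩⟩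
    | .fn f as, .fn g bs, hts, _ =>
      simp only [subst, fn.injEq] at hts
      obtain ⟨rfl, hab⟩ := hts
      have hlen : as.length = bs.length := Unifies.length_eq hab
      obtain ⟨σ, hσ⟩ := exists_isMGU_of_unifies (as ++ ts) (bs ++ ss) τ
        ((unifies_append_iff hlen).2 ⟨hab, h'⟩)
      refine ⟨σ, hσ.of_unifies_iff fun τ => ?_⟩
      rw [unifies_append_iff hlen, unifies_cons_cons_iff]
      simp [subst, Unifies]
    | .par _, .par _, hts, hst => simp_all [subst]
    | .par _, .fn _ _, hts, _ | .fn _ _, .par _, hts, _ => simp [subst] at hts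
termination_by ts ss => unifMeasure ts ss
decreasing_by
  · subst_vars; exact unifMeasure_cons_self _ _ _
  · exact unifMeasure_var_cons hx _ _
  · rw [unifMeasure_comm (_ :: _)]; exact unifMeasure_var_cons hx _ _
  · exact unifMeasure_fn_cons _ _ _ _ _

theorem Literal.subst_subst (σ ρ : ℕ → FOTerm) (M : Literal) :
    Literal.subst ρ (Literal.subst σ M) = Literal.subst (FOTerm.subst ρ ∘ σ) M := by
  obtain ⟨p, a⟩ := M
  cases a <;> simp [Literal.subst, FOTerm.subst_subst, substList_substList]

theorem Clause.subst_subst (σ ρ : ℕ → FOTerm) (S : Clause) :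
    Clause.subst ρ (Clause.subst σ S) = Clause.subst (FOTerm.subst ρ ∘ σ) S := by
  simp only [Clause.subst, Finset.image_image]
  exact Finset.image_congr fun M _ => Literal.subst_subst σ ρ M

theorem Literal.unifies_args_of_subst_eq {σ : ℕ → FOTerm} {L₁ L₂ : Literal}
    (hsym : L₁.atom.sym = L₂.atom.sym) (h : Literal.subst σ L₁ = Literal.subst σ L₂) :
    Unifies σ L₁.atom.args L₂.atom.args := by
  obtain ⟨p₁, a₁⟩ := L₁
  obtain ⟨p₂, a₂⟩ := L₂
  cases a₁ <;> cases a₂ <;>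
    simp_all [Atom.sym, Literal.subst, Atom.args, Unifies, substList]

theorem exists_transGen_facElimStep_of_subst_eq {C : Clause} {σ : ℕ → FOTerm}
    {L₁ L₂ : Literal} (h₁ : L₁ ∈ C) (h₂ : L₂ ∈ C) (hne : L₁ ≠ L₂) (hk : L₁.sameKind L₂)
    (heq : Literal.subst σ L₁ = Literal.subst σ L₂) :
    ∃ μ ρ, Relation.TransGen facElimStep C (Clause.subst μ (C.erase L₂)) ∧
      σ = subst ρ ∘ μ := by
  have hσ := Literal.unifies_args_of_subst_eq hk.2 heq
  obtain ⟨μ, hμ⟩ := exists_isMGU_of_unifies _ _ σ hσ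
  obtain ⟨ρ, hρ⟩ := (isMGU_iff.1 hμ).2 σ hσ
  have hfac : facElimStep C (constraintClause L₁.atom.args L₂.atom.args ∪ C.erase L₂) :=
    .inl ⟨L₁, h₁, L₂, h₂, hne, hk, rfl⟩
  have helim : facElimStep (constraintClause L₁.atom.args L₂.atom.args ∪ C.erase L₂)
      (Clause.subst μ (C.erase L₂)) :=
    .inr ⟨_, _, _, μ, rfl, hμ, rfl⟩
  exact ⟨μ, ρ, .tail (.single hfac) helim, hρ⟩

theorem exists_facElim_subsumesL_of_subst_subset (L : Literal) {C C' : Clause}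
    {σ : ℕ → FOTerm} (hσ : Clause.subst σ C ⊆ C') :
    ∃ CL, Relation.ReflTransGen facElimStep C CL ∧ subsumesL L CL C' := by
  by_cases hinj : LInjective L σ C
  · exact ⟨C, .refl, σ, hinj, hσ⟩
  simp only [LInjective, not_forall] at hinj
  obtain ⟨L₁, h₁, L₂, h₂, hk₁, hk₂, heq, hne⟩ := hinj
  obtain ⟨μ, ρ, hsteps, rfl⟩ := exists_transGen_facElimStep_of_subst_eq h₁ h₂ hne
    ⟨hk₁.1.trans hk₂.1.symm, hk₁.2.trans hk₂.2.symm⟩ heq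
  have hρ : Clause.subst ρ (Clause.subst μ (C.erase L₂)) ⊆ C' := by
    rw [Clause.subst_subst]
    exact (Finset.image_subset_image (C.erase_subset L₂)).trans hσ
  obtain ⟨CL, hCL, hsubL⟩ := exists_facElim_subsumesL_of_subst_subset L hρ
  exact ⟨CL, hsteps.to_reflTransGen.trans hCL, hsubL⟩
termination_by C.card
decreasing_by
  exact Finset.card_image_le.trans_lt (Finset.card_erase_lt_of_mem h₂)

/-- If `C` subsumes `C'`, then there exists a clause `C_L`
obtained from `C` by a finite number of constraint-factoring and
constraint-elimination inferences such that `C_L ⊴_L C'`. -/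
theorem subsumption_to_L_injective_subsumption (C C' : Clause) (L : Literal)
    (h : Clause.subsumes C C') :
    ∃ CL : Clause, Relation.ReflTransGen facElimStep C CL ∧ subsumesL L CL C' := by
  obtain ⟨σ, hσ⟩ := h
  exact exists_facElim_subsumesL_of_subst_subset L hσ

end SCANPaper
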